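/- arXiv:2505.05096 — 8 statements merged into one kernel-verified Lean document; each statement's English description precedes it below -/
import Mathlib

section
/- The dressing chain u_{1,x} = (u_1 - u)² - u_x + α is consistent with the Volterra-type chain u_z = β/(u_1 - u_{-1}), in the sense that the identity D_x T(g) = D_z(h_+) holds identically, where g = β/(u_1 - u_{-1}), T(g) = β/(u_2 - u_0), h_+ = (u_1 - u_0)² - w + α, and derivatives are computed using u_{k,x} determined recursively from the dressing chain with u_{0,x} = w, u_{k,z} = T^k(g). -/
/-- consistency of the dressing chain `u_{1,x} = (u₁-u₀)² - w + α` with the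
Volterra-type chain `u_z = β/(u₁ - u₋₁)`: the identity `D_x T(g) = D_z(h₊)` holds
identically in the dynamic variables `(w, u₋₁, u₀, u₁, u₂)`, where
`g = β/(u₁-u₋₁)`, `T(g) = β/(u₂-u₀)`, `h₊ = (u₁-u₀)² - w + α`,
`u_{0,x} = w`, `u_{1,x}, u_{2,x}, u_{-1,x}` are determined by the (shifted) dressing chain,
`u_{k,z} = T^k(g)` and `w_z = D_x(g)`. -/
theorem stmt4 (α β : ℝ) (w um1 u0 u1 u2 : ℝ)
    (h1 : u1 - um1 ≠ 0) (h2 : u2 - u0 ≠ 0) :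
    -- derivatives in x determined by the dressing chain:
    let u0x := w
    let u1x := (u1 - u0) ^ 2 - w + α
    let u2x := (u2 - u1) ^ 2 - u1x + α
    let um1x := (u0 - um1) ^ 2 - w + α
    -- derivatives in z determined by the Volterra chain:
    let u0z := β / (u1 - um1)
    let u1z := β / (u2 - u0)
    let wz := -(β * (u1x - um1x)) / (u1 - um1) ^ 2   -- w_z = D_x(g)
    -- D_x T(g) = D_z(h₊):
    (-(β * (u2x - u0x)) / (u2 - u0) ^ 2
      = 2 * (u1 - u0) * (u1z - u0z) - wz) := by
  simp only []
  field_simp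
  ring
end

section
/- Elimination of the discrete variable: suppose u_{n-1,x} = (u_n - u_{n-1})² - u_{n,x} + α (dressing chain), u_{n+1,x} = (u_{n+1} - u_n)² - u_{n,x} + α, and u_{n,z} = β/(u_{n+1} - u_{n-1}) (Volterra chain). Then u_{n+1} = u_n - (u_{n,xz} - β)/(2 u_{n,z}), and substituting into the dressing chain yields u_{n,xxz} = (u_{n,xz}² - β²)/(2 u_{n,z}) + 2(2 u_{n,x} - α) u_{n,z}. -/
/-- Partial derivative in the first (x) variable. -/
noncomputable def pdx (f : ℝ → ℝ → ℝ) : ℝ → ℝ → ℝ :=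
  fun x z => deriv (fun x' => f x' z) x

/-- Partial derivative in the second (z) variable. -/
noncomputable def pdz (f : ℝ → ℝ → ℝ) : ℝ → ℝ → ℝ :=
  fun x z => deriv (fun z' => f x z') z

/-- elimination of the discrete variable.  If smooth functions
`u₋ = u_{n-1}, u = u_n, u₊ = u_{n+1}` of `(x,z)` satisfy the dressing chain
`u_{n-1,x} = (u_n - u_{n-1})² - u_{n,x} + α`, `u_{n+1,x} = (u_{n+1} - u_n)² - u_{n,x} + α`
and the Volterra chain `u_{n,z} = β/(u_{n+1} - u_{n-1})` (with `u_{n,z} ≠ 0` and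
`u_{n+1} - u_{n-1} ≠ 0`), then `u_{n+1} = u_n - (u_{n,xz} - β)/(2 u_{n,z})` and
`u_{n,xxz} = (u_{n,xz}² - β²)/(2 u_{n,z}) + 2 (2 u_{n,x} - α) u_{n,z}`. -/
theorem stmt5 (α β : ℝ) (um u up : ℝ → ℝ → ℝ)
    (hum : ContDiff ℝ (⊤ : ℕ∞) (Function.uncurry um))
    (hu : ContDiff ℝ (⊤ : ℕ∞) (Function.uncurry u))
    (hup : ContDiff ℝ (⊤ : ℕ∞) (Function.uncurry up))
    (hd : ∀ x z, up x z - um x z ≠ 0)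
    (hz : ∀ x z, pdz u x z ≠ 0)
    (hdress_m : ∀ x z, pdx um x z = (u x z - um x z) ^ 2 - pdx u x z + α)
    (hdress_p : ∀ x z, pdx up x z = (up x z - u x z) ^ 2 - pdx u x z + α)
    (hvol : ∀ x z, pdz u x z = β / (up x z - um x z)) :
    (∀ x z, up x z = u x z - (pdx (pdz u) x z - β) / (2 * pdz u x z))
    ∧ (∀ x z, pdx (pdx (pdz u)) x z
        = ((pdx (pdz u) x z) ^ 2 - β ^ 2) / (2 * pdz u x z)
          + 2 * (2 * pdx u x z - α) * pdz u x z) := by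

  have hder : ∀ (f : ℝ → ℝ → ℝ), ContDiff ℝ (⊤ : ℕ∞) (Function.uncurry f) →
      ∀ x z : ℝ, HasDerivAt (fun x' => f x' z) (pdx f x z) x := by
    intro f hf x z
    have h1 : DifferentiableAt ℝ (Function.uncurry f) (x, z) :=
      (hf.differentiable (by simp)) (x, z)
    have hdiff : DifferentiableAt ℝ (fun x' => f x' z) x :=
      by have := h1.comp x (DifferentiableAt.prodMk (differentiableAt_fun_id (𝕜 := ℝ) (x := x)) (differentiableAt_const z)); exact this
    exact hdiff.hasDerivAt
  have hβ : β ≠ 0 := by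
    have h := hz 0 0
    rw [hvol] at h
    intro h0
    apply h
    rw [h0, zero_div]
  have key : ∀ x z, pdx (pdz u) x z
      = -β * ((up x z - u x z) ^ 2 - (u x z - um x z) ^ 2) / (up x z - um x z) ^ 2 := by
    intro x z
    have hfun : (fun x' => pdz u x' z) = fun x' => β / (up x' z - um x' z) :=
      funext fun x' => hvol x' z
    have hP := hder up hup x z
    have hM := hder um hum x z
    have hdd : HasDerivAt (fun x' => β / (up x' z - um x' z))
        ((0 * (up x z - um x z) - β * (pdx up x z - pdx um x z)) / (up x z - um x z) ^ 2) x :=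
      (hasDerivAt_const x β).div (hP.sub hM) (hd x z)
    have hval : pdx (pdz u) x z
        = (0 * (up x z - um x z) - β * (pdx up x z - pdx um x z)) / (up x z - um x z) ^ 2 := by
      show deriv (fun x' => pdz u x' z) x = _
      rw [hfun]
      exact hdd.deriv
    rw [hval, hdress_p, hdress_m]
    ring
  constructor
  · intro x z
    rw [key, hvol]
    field_simp [hd x z, hβ]
    ring
  · intro x z
    have hkfun : (fun x' => pdx (pdz u) x' z)
        = fun x' => -β * ((up x' z - u x' z) ^ 2 - (u x' z - um x' z) ^ 2) / (up x' z - um x' z) ^ 2 :=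
      funext fun x' => key x' z
    have hU := hder u hu x z
    have hP := hder up hup x z
    have hM := hder um hum x z
    have hnum : HasDerivAt
        (fun x' => -β * ((up x' z - u x' z) ^ 2 - (u x' z - um x' z) ^ 2))
        (-β * (2 * (up x z - u x z) * (pdx up x z - pdx u x z)
          - 2 * (u x z - um x z) * (pdx u x z - pdx um x z))) x := by
      have h := (((hP.sub hU).pow 2).sub ((hU.sub hM).pow 2)).const_mul (-β)
      exact h.congr_deriv (by simp only [Pi.sub_apply]; norm_num)
    have hden : HasDerivAt (fun x' => (up x' z - um x' z) ^ 2)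
        (2 * (up x z - um x z) * (pdx up x z - pdx um x z)) x := by
      have h := (hP.sub hM).pow 2
      exact h.congr_deriv (by simp only [Pi.sub_apply]; norm_num)
    have hden0 : (up x z - um x z) ^ 2 ≠ 0 := pow_ne_zero _ (hd x z)
    have hdd := hnum.div hden hden0
    have hval : pdx (pdx (pdz u)) x z
        = ((-β * (2 * (up x z - u x z) * (pdx up x z - pdx u x z)
            - 2 * (u x z - um x z) * (pdx u x z - pdx um x z))) * ((up x z - um x z) ^ 2)
          - (-β * ((up x z - u x z) ^ 2 - (u x z - um x z) ^ 2))
            * (2 * (up x z - um x z) * (pdx up x z - pdx um x z)))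
          / ((up x z - um x z) ^ 2) ^ 2 := by
      show deriv (fun x' => pdx (pdz u) x' z) x = _
      rw [hkfun]
      exact hdd.deriv
    rw [hval, key, hvol, hdress_p, hdress_m]
    field_simp [hd x z, hβ]
    ring
end

section
/- Compatibility of Bäcklund transformations yields H1: if smooth functions a = u_{n,m}, b = u_{n+1,m}, c = u_{n,m+1}, d = u_{n+1,m+1} of x satisfy b' + a' = (b-a)² + α₁, c' + a' = (c-a)² + α₂, d' + c' = (d-c)² + α₁, and d' + b' = (d-b)² + α₂, then the x-derivative of (a - d)(b - c) is zero; moreover the four equations are mutually consistent exactly when (a - d)(b - c) = α₁ - α₂ (the quad equation H1). -/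
/-- compatibility of Bäcklund transformations yields H1.  If smooth
functions `a = u_{n,m}`, `b = u_{n+1,m}`, `c = u_{n,m+1}`, `d = u_{n+1,m+1}` satisfy
`b' + a' = (b-a)² + α₁`, `c' + a' = (c-a)² + α₂`, `d' + c' = (d-c)² + α₁`,
`d' + b' = (d-b)² + α₂`, then `(a-d)(b-c)` has vanishing x-derivative, and moreover
`(a-d)(b-c) = α₁ - α₂` (the quad equation H1) holds. -/
theorem stmt6 (α₁ α₂ : ℝ) (a b c d : ℝ → ℝ)
    (ha : ContDiff ℝ (⊤ : ℕ∞) a) (hb : ContDiff ℝ (⊤ : ℕ∞) b)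
    (hc : ContDiff ℝ (⊤ : ℕ∞) c) (hd : ContDiff ℝ (⊤ : ℕ∞) d)
    (h1 : ∀ x, deriv b x + deriv a x = (b x - a x) ^ 2 + α₁)
    (h2 : ∀ x, deriv c x + deriv a x = (c x - a x) ^ 2 + α₂)
    (h3 : ∀ x, deriv d x + deriv c x = (d x - c x) ^ 2 + α₁)
    (h4 : ∀ x, deriv d x + deriv b x = (d x - b x) ^ 2 + α₂) :
    (∀ x, deriv (fun y => (a y - d y) * (b y - c y)) x = 0)
    ∧ (∀ x, (a x - d x) * (b x - c x) = α₁ - α₂) := by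
  have key : ∀ x, (a x - d x) * (b x - c x) = α₁ - α₂ := by
    intro x
    linear_combination (h1 x - h2 x + h3 x - h4 x) / 2
  refine ⟨?_, key⟩
  intro x
  have : (fun y => (a y - d y) * (b y - c y)) = fun _ => α₁ - α₂ := funext key
  rw [this, deriv_const]
end

section
/- The Burgers-type negative symmetries u_{x z_i} = u_x(u_{z_i} - δ_i)/(u - α_i) - (u - α_i) u_{z_i}, i = 1,2, are compatible: defining u_{z_1 z_2} = (1/(u-α_1) + 1/(u-α_2)) u_{z_1} u_{z_2} + δ_2 (u-α_1) u_{z_1}/((α_1-α_2)(u-α_2)) + δ_1 (u-α_2) u_{z_2}/((α_2-α_1)(u-α_1)), the cross-derivative identity D_{z_2}(G_1) = D_{z_1}(G_2) holds identically, where G_i denotes the right-hand side of the i-th negative symmetry and derivatives are computed using the given equations and their differential consequences. -/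
/-!
Each `G_i` is affine in `u_x` and in `u_{z_i}` and rational in `u`, so the three partial
derivatives entering the total derivatives are explicit. Substituting them, both sides of the
cross-derivative identity become rational functions with denominator dividing
`(u - α₁)² (u - α₂)² (α₁ - α₂)`, and after clearing it the identity is a polynomial one.
-/

/-- Right-hand side `G_i(u, u_x, u_{z_i})` of the Burgers negative symmetry
`u_{x z_i} = u_x (u_{z_i} - δ)/(u - α) - (u - α) u_{z_i}`. -/
noncomputable def G (α δ : ℝ) (u ux uz : ℝ) : ℝ :=
  ux * (uz - δ) / (u - α) - (u - α) * uz

/-- Right-hand side of the cross equation `u_{z₁ z₂} = P`. -/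
noncomputable def Pcross (α₁ α₂ δ₁ δ₂ : ℝ) (u uz1 uz2 : ℝ) : ℝ :=
  (1 / (u - α₁) + 1 / (u - α₂)) * uz1 * uz2
    + δ₂ * (u - α₁) * uz1 / ((α₁ - α₂) * (u - α₂))
    + δ₁ * (u - α₂) * uz2 / ((α₂ - α₁) * (u - α₁))

lemma hasDerivAt_G_u (α δ ux uz u : ℝ) (hu : u ≠ α) :
    HasDerivAt (fun t => G α δ t ux uz) (-(ux * (uz - δ)) / (u - α) ^ 2 - uz) u := by
  have hsub : HasDerivAt (fun t : ℝ => t - α) 1 u := (hasDerivAt_id u).sub_const α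
  exact (((hasDerivAt_const u (ux * (uz - δ))).div hsub (sub_ne_zero.mpr hu)).sub
    (hsub.mul_const uz)).congr_deriv (by ring)

lemma hasDerivAt_G_ux (α δ u uz ux : ℝ) :
    HasDerivAt (fun t => G α δ u t uz) ((uz - δ) / (u - α)) ux :=
  (((hasDerivAt_id ux).mul_const (uz - δ)).div_const (u - α)).sub_const ((u - α) * uz)
    |>.congr_deriv (by ring)

lemma hasDerivAt_G_uz (α δ u ux uz : ℝ) :
    HasDerivAt (fun t => G α δ u ux t) (ux / (u - α) - (u - α)) uz :=
  ((((hasDerivAt_id uz).sub_const δ).const_mul ux).div_const (u - α)).sub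
    ((hasDerivAt_id uz).const_mul (u - α)) |>.congr_deriv (by ring)

/-- the Burgers-type negative symmetries are compatible:
`D_{z₂}(G₁) = D_{z₁}(G₂)` identically in the jet coordinates, where the total
derivatives act by the chain rule with the substitutions `u_{z_i} ↦ uz_i`,
`u_{x z_i} ↦ G_i`, `u_{z₁ z₂} ↦ P`. -/
theorem stmt8 (α₁ α₂ δ₁ δ₂ : ℝ) (hα : α₁ ≠ α₂) :
    ∀ u ux uz1 uz2 : ℝ, u ≠ α₁ → u ≠ α₂ →
      -- D_{z₂}(G₁) = ∂_u G₁ · u_{z₂} + ∂_{u_x} G₁ · u_{x z₂} + ∂_{u_{z₁}} G₁ · u_{z₁ z₂}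
      deriv (fun t => G α₁ δ₁ t ux uz1) u * uz2
        + deriv (fun t => G α₁ δ₁ u t uz1) ux * G α₂ δ₂ u ux uz2
        + deriv (fun t => G α₁ δ₁ u ux t) uz1 * Pcross α₁ α₂ δ₁ δ₂ u uz1 uz2
      = deriv (fun t => G α₂ δ₂ t ux uz2) u * uz1
        + deriv (fun t => G α₂ δ₂ u t uz2) ux * G α₁ δ₁ u ux uz1
        + deriv (fun t => G α₂ δ₂ u ux t) uz2 * Pcross α₁ α₂ δ₁ δ₂ u uz1 uz2 := by
  intro u ux uz1 uz2 h₁ h₂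
  rw [(hasDerivAt_G_u α₁ δ₁ ux uz1 u h₁).deriv, (hasDerivAt_G_u α₂ δ₂ ux uz2 u h₂).deriv,
    (hasDerivAt_G_ux α₁ δ₁ u uz1 ux).deriv, (hasDerivAt_G_ux α₂ δ₂ u uz2 ux).deriv,
    (hasDerivAt_G_uz α₁ δ₁ u ux uz1).deriv, (hasDerivAt_G_uz α₂ δ₂ u ux uz2).deriv]
  have : u - α₁ ≠ 0 := sub_ne_zero.mpr h₁
  have : u - α₂ ≠ 0 := sub_ne_zero.mpr h₂
  have : α₁ - α₂ ≠ 0 := sub_ne_zero.mpr hα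
  simp only [G, Pcross]
  field_simp
  ring
end

section
/- The potential-Burgers negative symmetries v_{x z_i} = -v_x v_{z_i} + α_i v_{z_i} + β_i v_x + γ_i, i=1,2 with α_1 ≠ α_2, are 3D compatible: with v_{z_1 z_2} = -v_{z_1} v_{z_2} + ((γ_2 + α_1 β_2) v_{z_1} - (γ_1 + α_2 β_1) v_{z_2} + β_2 γ_1 - β_1 γ_2)/(α_1 - α_2), the identity D_{z_2}(-v_x v_{z_1} + α_1 v_{z_1} + β_1 v_x + γ_1) = D_{z_1}(-v_x v_{z_2} + α_2 v_{z_2} + β_2 v_x + γ_2) holds identically, where all mixed derivatives are evaluated via the given equations. -/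
/-- 3D compatibility of the potential-Burgers negative symmetries
`v_{x z_i} = -v_x v_{z_i} + α_i v_{z_i} + β_i v_x + γ_i` (`α₁ ≠ α₂`) with
`v_{z₁z₂} = -v_{z₁} v_{z₂} + ((γ₂+α₁β₂) v_{z₁} - (γ₁+α₂β₁) v_{z₂} + β₂γ₁ - β₁γ₂)/(α₁-α₂)`:
the identity `D_{z₂}(G₁) = D_{z₁}(G₂)` holds identically in the jet coordinates, where
`G_i = -v_x v_{z_i} + α_i v_{z_i} + β_i v_x + γ_i` and the total derivatives act by the
chain rule with `v_{x z_j} ↦ G_j`, `v_{z₁ z₂} ↦ P`. -/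
theorem stmt9 (α₁ α₂ β₁ β₂ γ₁ γ₂ : ℝ) (hα : α₁ ≠ α₂) :
    ∀ vx vz1 vz2 : ℝ,
      let G1 := -vx * vz1 + α₁ * vz1 + β₁ * vx + γ₁
      let G2 := -vx * vz2 + α₂ * vz2 + β₂ * vx + γ₂
      let P := -vz1 * vz2
        + ((γ₂ + α₁ * β₂) * vz1 - (γ₁ + α₂ * β₁) * vz2 + β₂ * γ₁ - β₁ * γ₂) / (α₁ - α₂)
      -- D_{z₂}(G₁): ∂_{v_x}G₁ · v_{x z₂} + ∂_{v_{z₁}}G₁ · v_{z₁z₂}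
      ((-vz1 + β₁) * G2 + (-vx + α₁) * P
        = (-vz2 + β₂) * G1 + (-vx + α₂) * P) := by
  intro vx vz1 vz2
  have h : α₁ - α₂ ≠ 0 := sub_ne_zero.mpr hα
  simp only []
  field_simp
  ring
end

section
/- The linear negative symmetries of the heat equation, w_{x z_i} = α_i w_{z_i} + β_i w_x + γ_i w for i = 1,2 with α_1 ≠ α_2, are compatible: defining w_{z_1 z_2} by the requirement that D_{z_2}(α_1 w_{z_1} + β_1 w_x + γ_1 w) = D_{z_1}(α_2 w_{z_2} + β_2 w_x + γ_2 w), there is a unique expression for w_{z_1 z_2} linear in (w, w_{z_1}, w_{z_2}) making the cross derivatives agree, namely w_{z_1 z_2} = [ (γ_2 + β_2 α_1) w_{z_1} - (γ_1 + β_1 α_2) w_{z_2} + (β_2 γ_1 - β_1 γ_2) w ] / (α_1 - α_2), and with this definition both cross derivatives D_{z_2}(w_{xz_1}) and D_{z_1}(w_{xz_2}) coincide as functions of the jet coordinates (w, w_x, w_{z_1}, w_{z_2}). -/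
/-- compatibility of the linear negative symmetries of the heat equation
`w_{x z_i} = α_i w_{z_i} + β_i w_x + γ_i w`, `α₁ ≠ α₂`.  The expression
`Z = ((γ₂+β₂α₁) w_{z₁} - (γ₁+β₁α₂) w_{z₂} + (β₂γ₁-β₁γ₂) w)/(α₁-α₂)` is the unique value
of `w_{z₁z₂}` making the two cross derivatives
`D_{z₂}(w_{x z₁}) = α₁ w_{z₁z₂} + β₁ w_{x z₂} + γ₁ w_{z₂}` and
`D_{z₁}(w_{x z₂}) = α₂ w_{z₁z₂} + β₂ w_{x z₁} + γ₂ w_{z₁}` coincide, where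
`w_{x z_i}` is replaced using the equations. -/
theorem stmt10 (α₁ α₂ β₁ β₂ γ₁ γ₂ : ℝ) (hα : α₁ ≠ α₂) :
    ∀ w wx wz1 wz2 : ℝ, ∀ Z : ℝ,
      (α₁ * Z + β₁ * (α₂ * wz2 + β₂ * wx + γ₂ * w) + γ₁ * wz2
        = α₂ * Z + β₂ * (α₁ * wz1 + β₁ * wx + γ₁ * w) + γ₂ * wz1)
      ↔ Z = ((γ₂ + β₂ * α₁) * wz1 - (γ₁ + β₁ * α₂) * wz2 + (β₂ * γ₁ - β₁ * γ₂) * w)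
            / (α₁ - α₂) := by
  intro w wx wz1 wz2 Z
  have h : α₁ - α₂ ≠ 0 := sub_ne_zero.mpr hα
  rw [eq_div_iff h]
  constructor <;> intro hh <;> linarith [hh]
end

section
/- The linear chain for the heat equation is consistent: the equations w_{n,x} + a₁ w_{n+1,x} = a₂ w_n + a₃ w_{n+1} and w_{n,z} = b₁ w_{n+1} + b₂ w_n + b₃ w_{n-1} are compatible if a₁ a₃ = a₂; that is, with w_{n+1,x} = a₁^{-1}(a₂ w_n + a₃ w_{n+1} - w_{n,x}) and w_{n-1,x} determined by the shifted chain, and w_{n±1,z} given by shifting the z-equation, the identity ∂_x(b₁ w_{n+1} + b₂ w_n + b₃ w_{n-1}) = ∂_z applied to the x-chain, evaluated on jet variables, holds for all n when a₂ = a₁ a₃. -/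
/-- consistency of the linear chains for the heat equation.
For the x-chain `w_{n,x} + a₁ w_{n+1,x} = a₂ w_n + a₃ w_{n+1}` (with `a₁ ≠ 0`) and the
z-chain `w_{n,z} = b₁ w_{n+1} + b₂ w_n + b₃ w_{n-1}`, the cross-derivative identity
`D_x T(g) = D_z(h)` holds identically in the jet variables
`(w_{n-1}, w_n, w_{n+1}, w_{n+2}, w_{n,x})` whenever `a₂ = a₁ a₃`.  Here
`w_{n+1,x} = a₁⁻¹(a₂ w_n + a₃ w_{n+1} - w_{n,x})`, `w_{n+2,x}` and `w_{n-1,x}` come from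
the shifted x-chains, `w_{n±1,z}` from the shifted z-chain, and
`w_{n,xz} = D_x(b₁ w_{n+1} + b₂ w_n + b₃ w_{n-1})`. -/
theorem stmt14 (a₁ a₂ a₃ b₁ b₂ b₃ : ℝ) (ha₁ : a₁ ≠ 0) (hcon : a₂ = a₁ * a₃) :
    ∀ wm1 w0 w1 w2 w0x : ℝ,
      let w1x := (a₂ * w0 + a₃ * w1 - w0x) / a₁
      let w2x := (a₂ * w1 + a₃ * w2 - w1x) / a₁
      let wm1x := a₂ * wm1 + a₃ * w0 - a₁ * w0x
      let w0z := b₁ * w1 + b₂ * w0 + b₃ * wm1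
      let w1z := b₁ * w2 + b₂ * w1 + b₃ * w0
      let w0xz := b₁ * w1x + b₂ * w0x + b₃ * wm1x
      -- D_x T(g) = D_z(h₊), with h₊ = w_{n+1,x} solved from the x-chain:
      (b₁ * w2x + b₂ * w1x + b₃ * w0x
        = (a₂ * w0z + a₃ * w1z - w0xz) / a₁) := by
  intro wm1 w0 w1 w2 w0x
  simp only
  subst hcon
  field_simp
  ring
end

section
/- The Alonso–Shabat system is self-consistent: for the equations v_{z_i z_j} = (v_{z_i} v_{x z_j} - v_{z_j} v_{x z_i}) / (2(α_i - α_j)) for pairwise distinct i,j,k with pairwise distinct parameters α_i, the triple cross-derivative identity D_{z_k}(v_{z_i z_j}) = D_{z_j}(v_{z_i z_k}) holds identically when all second- and third-order mixed z-derivatives are evaluated via the system and its x-differentiated consequences v_{x z_i z_j} = D_x applied to the right-hand sides. -/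
/-- The Alonso–Shabat right-hand side
`P_{ij} = (v_{z_i} v_{x z_j} - v_{z_j} v_{x z_i}) / (2(α_i - α_j))`. -/
noncomputable def Pas (αi αj vzi vzj vxzi vxzj : ℝ) : ℝ :=
  (vzi * vxzj - vzj * vxzi) / (2 * (αi - αj))

/-- The x-differentiated consequence
`D_x(P_{ij}) = (v_{z_i} v_{xx z_j} - v_{z_j} v_{xx z_i}) / (2(α_i - α_j))`
(the `v_{x z_i} v_{x z_j}` terms cancel). -/
noncomputable def DxPas (αi αj vzi vzj vxxzi vxxzj : ℝ) : ℝ :=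
  (vzi * vxxzj - vzj * vxxzi) / (2 * (αi - αj))

/-- the Alonso–Shabat system
`v_{z_i z_j} = (v_{z_i} v_{x z_j} - v_{z_j} v_{x z_i})/(2(α_i - α_j))` is self-consistent:
with mixed derivatives evaluated via the system and its x-differentiated consequences,
`D_{z_3}(v_{z_1 z_2}) = D_{z_2}(v_{z_1 z_3}) = D_{z_1}(v_{z_2 z_3})` identically in the
jet coordinates, for pairwise distinct parameters. -/
theorem stmt17 (α₁ α₂ α₃ : ℝ) (h12 : α₁ ≠ α₂) (h13 : α₁ ≠ α₃) (h23 : α₂ ≠ α₃) :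
    ∀ vz1 vz2 vz3 vxz1 vxz2 vxz3 vxxz1 vxxz2 vxxz3 : ℝ,
      -- D_{z_k}(P_{ij}) by the chain rule, substituting v_{z_i z_k} ↦ P_{ik} and
      -- v_{x z_i z_k} ↦ D_x(P_{ik}):
      let Dz3P12 :=
        (Pas α₁ α₃ vz1 vz3 vxz1 vxz3 * vxz2
          + vz1 * DxPas α₂ α₃ vz2 vz3 vxxz2 vxxz3
          - Pas α₂ α₃ vz2 vz3 vxz2 vxz3 * vxz1
          - vz2 * DxPas α₁ α₃ vz1 vz3 vxxz1 vxxz3) / (2 * (α₁ - α₂))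
      let Dz2P13 :=
        (Pas α₁ α₂ vz1 vz2 vxz1 vxz2 * vxz3
          + vz1 * DxPas α₃ α₂ vz3 vz2 vxxz3 vxxz2
          - Pas α₃ α₂ vz3 vz2 vxz3 vxz2 * vxz1
          - vz3 * DxPas α₁ α₂ vz1 vz2 vxxz1 vxxz2) / (2 * (α₁ - α₃))
      let Dz1P23 :=
        (Pas α₂ α₁ vz2 vz1 vxz2 vxz1 * vxz3
          + vz2 * DxPas α₃ α₁ vz3 vz1 vxxz3 vxxz1
          - Pas α₃ α₁ vz3 vz1 vxz3 vxz1 * vxz2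
          - vz3 * DxPas α₂ α₁ vz2 vz1 vxxz2 vxxz1) / (2 * (α₂ - α₃))
      (Dz3P12 = Dz2P13 ∧ Dz2P13 = Dz1P23) := by
  intro vz1 vz2 vz3 vxz1 vxz2 vxz3 vxxz1 vxxz2 vxxz3
  have h12' : α₁ - α₂ ≠ 0 := sub_ne_zero.mpr h12
  have h13' : α₁ - α₃ ≠ 0 := sub_ne_zero.mpr h13
  have h23' : α₂ - α₃ ≠ 0 := sub_ne_zero.mpr h23
  have h21' : α₂ - α₁ ≠ 0 := sub_ne_zero.mpr h12.symm
  have h31' : α₃ - α₁ ≠ 0 := sub_ne_zero.mpr h13.symm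
  have h32' : α₃ - α₂ ≠ 0 := sub_ne_zero.mpr h23.symm
  simp only [Pas, DxPas]
  constructor <;> (field_simp; ring)
end
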